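/- arXiv:math/0205247 — 2 statements merged into one kernel-verified Lean document; each statement's English description precedes it below -/
import Mathlib

section
/- If a group G admits a homogeneous quasimorphism r that does not vanish identically on the commutator subgroup [G,G], then the diameter of [G,G] with respect to the commutator norm is infinite. -/
open scoped commutatorElement

/-!
Homogeneity makes `r` odd, so up to the defect `r` vanishes on every simple commutator; hence `r` is
bounded by a multiple of `n` on products of `n` commutators. On the other hand `r (h ^ m) = m * r h`
is unbounded in `m` when `r h ≠ 0`, so the powers of such an `h ∈ [G,G]` need arbitrarily many
commutators.
-/

def IsQuasimorphismWithDefect {G : Type*} [Mul G] (r : G → ℝ) (R : ℝ) : Prop :=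
  ∀ f g : G, |r (f * g) - r f - r g| ≤ R

namespace IsQuasimorphismWithDefect

variable {G : Type*} [Group G] {r : G → ℝ} {R : ℝ}

theorem abs_map_list_prod_sub_sum_le (hq : IsQuasimorphismWithDefect r R) (h1 : r 1 = 0)
    (l : List G) : |r l.prod - (l.map r).sum| ≤ l.length * R := by
  induction l with
  | nil => simp [h1]
  | cons a t ih =>
    have hstep := hq a t.prod
    rw [List.prod_cons, List.map_cons, List.sum_cons, List.length_cons, Nat.cast_succ]
    calc |r (a * t.prod) - (r a + (t.map r).sum)|
        ≤ |r (a * t.prod) - r a - r t.prod| + |r t.prod - (t.map r).sum| :=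
          le_of_eq_of_le (by ring_nf) (abs_add_le _ _)
      _ ≤ (t.length + 1) * R := by linarith

theorem abs_map_commutatorElement_le (hq : IsQuasimorphismWithDefect r R)
    (hinv : ∀ g : G, r g⁻¹ = -r g) (a b : G) : |r ⁅a, b⁆| ≤ 3 * R := by
  have h1 := abs_le.mp (hq a b)
  have h2 := abs_le.mp (hq (a * b) a⁻¹)
  have h3 := abs_le.mp (hq (a * b * a⁻¹) b⁻¹)
  rw [hinv] at h2 h3
  rw [commutatorElement_def, abs_le]
  constructor <;> linarith

theorem abs_map_prod_commutatorElement_le (hq : IsQuasimorphismWithDefect r R)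
    (h1 : r 1 = 0) (hinv : ∀ g : G, r g⁻¹ = -r g) {n : ℕ} (c : Fin n → G × G) :
    |r (List.ofFn fun i => ⁅(c i).1, (c i).2⁆).prod| ≤ 4 * n * R := by
  set l := List.ofFn fun i => ⁅(c i).1, (c i).2⁆
  have hsum : |(l.map r).sum| ≤ n * (3 * R) := by
    calc |(l.map r).sum| = |∑ i, r ⁅(c i).1, (c i).2⁆| := by
          simp [l, List.map_ofFn, List.sum_ofFn]
      _ ≤ ∑ i, |r ⁅(c i).1, (c i).2⁆| := Finset.abs_sum_le_sum_abs _ _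
      _ ≤ ∑ _i : Fin n, 3 * R :=
          Finset.sum_le_sum fun i _ => abs_map_commutatorElement_le hq hinv _ _
      _ = n * (3 * R) := by simp
  have hprod := hq.abs_map_list_prod_sub_sum_le h1 l
  rw [List.length_ofFn] at hprod
  linarith [abs_sub_abs_le_abs_sub (r l.prod) (l.map r).sum]

end IsQuasimorphismWithDefect

/-- If a group `G` admits a homogeneous quasimorphism `r` that does not vanish identically on
the commutator subgroup, then the diameter of `[G,G]` with respect to the commutator norm is
infinite: for every `C` there is an element of `[G,G]` any representation of which as a
product of `n` simple commutators has `n > C`. -/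
theorem commutator_norm_diameter_infinite_of_nonvanishing_quasimorphism
    {G : Type*} [Group G] (r : G → ℝ) (R : ℝ) (hR : 0 < R)
    (hq : ∀ f g : G, |r (f * g) - r f - r g| ≤ R)
    (hhom : ∀ (g : G) (m : ℤ), r (g ^ m) = m * r g)
    (hnv : ∃ h ∈ commutator G, r h ≠ 0) :
    ∀ C : ℝ, ∃ h : G, h ∈ commutator G ∧
      ∀ (n : ℕ) (c : Fin n → G × G),
        h = (List.ofFn fun i => ⁅(c i).1, (c i).2⁆).prod → C < (n : ℝ) := by
  have h1 : r 1 = 0 := by simpa using hhom 1 0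
  have hinv (g : G) : r g⁻¹ = -r g := by simpa using hhom g (-1)
  have hpow (g : G) (m : ℕ) : r (g ^ m) = m * r g := by simpa using hhom g m
  intro C
  obtain ⟨h, hh, hrh⟩ := hnv
  have hpos : 0 < |r h| := abs_pos.mpr hrh
  obtain ⟨m, hm⟩ := exists_nat_gt (4 * R * C / |r h|)
  refine ⟨h ^ m, pow_mem hh m, fun n c hc => ?_⟩
  have hbound := IsQuasimorphismWithDefect.abs_map_prod_commutatorElement_le hq h1 hinv c
  rw [← hc, hpow, abs_mul, Nat.abs_cast] at hbound
  rw [div_lt_iff₀ hpos] at hm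
  nlinarith
end

section
/- Every measured tree has a unique median. That is, if (T, ϱ) is a finite tree equipped with a non-atomic Borel probability measure whose restriction to each open edge is homeomorphic to the Lebesgue measure on an open interval, then there exists exactly one point x ∈ T such that the measure of each connected component of T \ {x} does not exceed 1/2. -/
/-!
Uniqueness: if `x ≠ y` were both medians, the component of `y` in `X \ {x}` and the component
of `x` in `X \ {y}` would cover the tree and overlap in a nonempty open set, so their measures
would add up to more than `1`.

Existence: otherwise every `x` has a component `H x` of `X \ {x}` of measure `> 1/2`. Any two of
these meet, so by the Helly property of subtrees and compactness the closures of all `H x` share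
a point `m`. For `y ∈ H m`, the point `m` then lies in `H y`, so the component of `X \ {y}`
containing `m` is heavy. Letting `y` run towards `m` along the edge by which `H m` leaves `m`,
these heavy components decrease to a set disjoint from `H m`, so `μ (H m)ᶜ ≥ 1/2`, which is
absurd.
-/

/-- A measured tree: a finite topological tree (compact, connected, Hausdorff, uniquely
arcwise connected, with a finite vertex set whose complementary components — the open
edges — are homeomorphic to open intervals, and with finitely many connected components
of the complement of any point), equipped with a non-atomic Borel probability measure
that is positive on every nonempty open set (in particular on every nondegenerate subarc
of every edge) and gives each vertex measure `0`. -/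
structure MeasuredTree where
  carrier : Type
  [topInst : TopologicalSpace carrier]
  [measInst : MeasurableSpace carrier]
  [borelInst : BorelSpace carrier]
  [compactInst : CompactSpace carrier]
  [connInst : ConnectedSpace carrier]
  [t2Inst : T2Space carrier]
  vertices : Finset carrier
  arc : ∀ x y : carrier, ∃ A : Set carrier, IsPreconnected A ∧ x ∈ A ∧ y ∈ A ∧
    ∀ B : Set carrier, IsPreconnected B → x ∈ B → y ∈ B → A ⊆ B
  finiteComponents : ∀ x : carrier,
    {C : Set carrier | ∃ y : carrier, y ≠ x ∧ C = connectedComponentIn {x}ᶜ y}.Finite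
  edgeHomeo : ∀ y : carrier, y ∉ vertices →
    Nonempty ((connectedComponentIn ((vertices : Set carrier))ᶜ y) ≃ₜ Set.Ioo (0 : ℝ) 1)
  μ : MeasureTheory.Measure carrier
  [probInst : MeasureTheory.IsProbabilityMeasure μ]
  nonatomic : ∀ x : carrier, μ {x} = 0
  openPos : ∀ U : Set carrier, IsOpen U → U.Nonempty → 0 < μ U

attribute [instance] MeasuredTree.topInst MeasuredTree.measInst MeasuredTree.borelInst
  MeasuredTree.compactInst MeasuredTree.connInst MeasuredTree.t2Inst MeasuredTree.probInst
/-- The measure of the connected component of `y` in the complement of `x`. -/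
noncomputable def MeasuredTree.componentMeasure (M : MeasuredTree) (x y : M.carrier) :
    ENNReal :=
  M.μ (connectedComponentIn {x}ᶜ y)

/-- A point `x` of a measured tree is a median if every connected component of the
complement of `x` has measure at most `1/2`. -/
def MeasuredTree.IsMedian (M : MeasuredTree) (x : M.carrier) : Prop :=
  ∀ y : M.carrier, y ≠ x → M.componentMeasure x y ≤ 1 / 2

/-- `φ(x)` is the maximum of the measures of the connected components of the complement
of `x`. -/
noncomputable def MeasuredTree.phi (M : MeasuredTree) (x : M.carrier) : ENNReal :=
  ⨆ y : {y : M.carrier // y ≠ x}, M.componentMeasure x y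

open Set Topology MeasureTheory Filter

section Components

variable {X : Type*} [TopologicalSpace X]

theorem IsPreconnected.insert_of_mem_closure {s : Set X} {x : X} (hs : IsPreconnected s)
    (hx : x ∈ closure s) : IsPreconnected (insert x s) :=
  hs.subset_closure (subset_insert x s) (insert_subset hx subset_closure)

theorem IsPreconnected.mem_closure_diff_singleton [T1Space X] {s : Set X} {x y : X}
    (hs : IsPreconnected s) (hx : x ∈ s) (hy : y ∈ s) (hyx : y ≠ x) : x ∈ closure (s \ {x}) := by
  refine mem_closure_iff.mpr fun U hU hxU => ?_
  obtain ⟨z, hzs, hzU, hzx⟩ := hs U {x}ᶜ hU isOpen_compl_singleton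
    (fun z _ => (em (z = x)).elim (fun h => .inl (h ▸ hxU)) .inr) ⟨x, hx, hxU⟩ ⟨y, hy, hyx⟩
  exact ⟨z, hzU, hzs, hzx⟩

theorem inter_closure_connectedComponentIn_subset (F : Set X) (y : X) :
    F ∩ closure (connectedComponentIn F y) ⊆ connectedComponentIn F y := by
  by_cases hy : y ∈ F
  · exact isPreconnected_connectedComponentIn.subset_closure
      (subset_inter (connectedComponentIn_subset F y) subset_closure) inter_subset_right
      |>.subset_connectedComponentIn ⟨hy, subset_closure (mem_connectedComponentIn hy)⟩
        inter_subset_left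
  · simp [connectedComponentIn_eq_empty hy]

theorem closure_connectedComponentIn_subset (F : Set X) (y : X) :
    closure (connectedComponentIn F y) ⊆ connectedComponentIn F y ∪ Fᶜ := fun z hz => by
  by_cases hzF : z ∈ F
  · exact .inl (inter_closure_connectedComponentIn_subset F y ⟨hzF, hz⟩)
  · exact .inr hzF

/-- A component of `F` is `F` minus the closures of the finitely many other components,
since `F ∩ closure K' = K'` for each of them. -/
theorem isOpen_connectedComponentIn_of_finite {F : Set X} (hF : IsOpen F)
    (hfin : {C | ∃ z ∈ F, C = connectedComponentIn F z}.Finite) (y : X) :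
    IsOpen (connectedComponentIn F y) := by
  set K := connectedComponentIn F y
  have hK : K = F \ ⋃ K' ∈ {C | ∃ z ∈ F, C = connectedComponentIn F z} \ {K}, closure K' := by
    ext z
    constructor
    · intro hz
      refine ⟨connectedComponentIn_subset F y hz, ?_⟩
      simp only [mem_iUnion, not_exists]
      rintro _ ⟨⟨w, -, rfl⟩, hne⟩ hzw
      have hzw' := inter_closure_connectedComponentIn_subset F w
        ⟨connectedComponentIn_subset F y hz, hzw⟩
      exact hne ((connectedComponentIn_eq hzw').trans (connectedComponentIn_eq hz).symm)
    · rintro ⟨hzF, hz⟩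
      by_contra hzK
      refine hz (mem_biUnion ⟨⟨z, hzF, rfl⟩, fun h => hzK ?_⟩
        (subset_closure (mem_connectedComponentIn hzF)))
      exact (mem_singleton_iff.mp h) ▸ mem_connectedComponentIn hzF
  rw [hK]
  exact hF.sdiff (hfin.sdiff.isClosed_biUnion fun _ _ => isClosed_closure)

theorem mem_closure_connectedComponentIn_compl_singleton [ConnectedSpace X] {x y : X}
    (hy : y ≠ x) (hopen : IsOpen (connectedComponentIn {x}ᶜ y)) :
    x ∈ closure (connectedComponentIn {x}ᶜ y) := by
  set K := connectedComponentIn {x}ᶜ y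
  by_contra hx
  have hclosed : IsClosed K := closure_subset_iff_isClosed.mp fun z hz =>
    (closure_connectedComponentIn_subset _ y hz).resolve_right
      fun hzx => hx (by rw [compl_compl, mem_singleton_iff] at hzx; exact hzx ▸ hz)
  have hyK : y ∈ K := mem_connectedComponentIn hy
  have hKuniv := (isClopen_iff.mp ⟨hclosed, hopen⟩).resolve_left (nonempty_of_mem hyK).ne_empty
  have hxK : x ∈ K := hKuniv ▸ mem_univ x
  exact connectedComponentIn_subset _ _ hxK rfl

end Components

section Arcs

variable {X : Type*} [TopologicalSpace X]

def connectingSet (x y : X) : Set X := ⋂₀ {B | IsPreconnected B ∧ x ∈ B ∧ y ∈ B}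

/-- `connectingSet x y` is then the least preconnected set containing `x` and `y`: the arc
from `x` to `y`. -/
def TreeLike (X : Type*) [TopologicalSpace X] : Prop :=
  ∀ x y : X, IsPreconnected (connectingSet x y)

theorem left_mem_connectingSet (x y : X) : x ∈ connectingSet x y :=
  mem_sInter.mpr fun _ hB => hB.2.1

theorem right_mem_connectingSet (x y : X) : y ∈ connectingSet x y :=
  mem_sInter.mpr fun _ hB => hB.2.2

theorem connectingSet_subset {x y : X} {B : Set X} (hB : IsPreconnected B) (hx : x ∈ B)
    (hy : y ∈ B) : connectingSet x y ⊆ B :=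
  sInter_subset_of_mem ⟨hB, hx, hy⟩

theorem treeLike_of_forall_exists_least
    (h : ∀ x y : X, ∃ A : Set X, IsPreconnected A ∧ x ∈ A ∧ y ∈ A ∧
      ∀ B : Set X, IsPreconnected B → x ∈ B → y ∈ B → A ⊆ B) : TreeLike X := fun x y => by
  obtain ⟨A, hA, hxA, hyA, hleast⟩ := h x y
  rwa [(connectingSet_subset hA hxA hyA).antisymm
    (subset_sInter fun B hB => hleast B hB.1 hB.2.1 hB.2.2)]

namespace TreeLike

theorem preconnectedSpace (hX : TreeLike X) : PreconnectedSpace X :=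
  ⟨isPreconnected_of_forall_pair fun x _ y _ =>
    ⟨_, subset_univ _, left_mem_connectingSet x y, right_mem_connectingSet x y, hX x y⟩⟩

theorem isPreconnected_inter (hX : TreeLike X) {A B : Set X} (hA : IsPreconnected A)
    (hB : IsPreconnected B) : IsPreconnected (A ∩ B) := by
  rcases (A ∩ B).eq_empty_or_nonempty with h | ⟨u, hu⟩
  · exact h ▸ isPreconnected_empty
  · have hAB : A ∩ B = ⋃ v ∈ A ∩ B, connectingSet u v :=
      subset_antisymm (fun v hv => mem_biUnion hv (right_mem_connectingSet u v)) <|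
        iUnion₂_subset fun v hv =>
          subset_inter (connectingSet_subset hA hu.1 hv.1) (connectingSet_subset hB hu.2 hv.2)
    rw [hAB, ← sUnion_image]
    exact isPreconnected_sUnion u _ (forall_mem_image.2 fun v _ => left_mem_connectingSet u v)
      (forall_mem_image.2 fun v _ => hX u v)

theorem inter_inter_nonempty (hX : TreeLike X) {A B C : Set X} (hA : IsClosed A)
    (hC : IsClosed C) (pA : IsPreconnected A) (pB : IsPreconnected B) (pC : IsPreconnected C)
    (hAB : (A ∩ B).Nonempty) (hAC : (A ∩ C).Nonempty) (hBC : (B ∩ C).Nonempty) :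
    (A ∩ B ∩ C).Nonempty := by
  obtain ⟨r, hrA, hrB⟩ := hAB
  obtain ⟨q, hqA, hqC⟩ := hAC
  obtain ⟨p, hpB, hpC⟩ := hBC
  have hpr : connectingSet p r ⊆ C ∪ A :=
    connectingSet_subset (pC.union q hqC hqA pA) (.inl hpC) (.inr hrA)
  obtain ⟨z, hz, hzC, hzA⟩ := isPreconnected_closed_iff.mp (hX p r) C A hC hA hpr
    ⟨p, left_mem_connectingSet p r, hpC⟩ ⟨r, right_mem_connectingSet p r, hrA⟩
  exact ⟨z, ⟨hzA, connectingSet_subset pB hpB hrB hz⟩, hzC⟩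

theorem iInter_nonempty (hX : TreeLike X) [CompactSpace X] {ι : Type*} [Nonempty ι]
    {s : ι → Set X} (hclosed : ∀ i, IsClosed (s i)) (hpre : ∀ i, IsPreconnected (s i))
    (hmeet : ∀ i j, (s i ∩ s j).Nonempty) : (⋂ i, s i).Nonempty := by
  classical
  have := hX.preconnectedSpace
  have hfin : ∀ F : Finset ι,
      IsPreconnected (⋂ i ∈ F, s i) ∧ ∀ j, (s j ∩ ⋂ i ∈ F, s i).Nonempty := by
    intro F
    induction F using Finset.induction_on with
    | empty => simpa using ⟨isPreconnected_univ, fun j => (hmeet j j).mono inter_subset_left⟩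
    | insert a F _ ih =>
      simp only [Finset.set_biInter_insert]
      refine ⟨hX.isPreconnected_inter (hpre a) ih.1, fun j => ?_⟩
      rw [← inter_assoc]
      exact hX.inter_inter_nonempty (hclosed j) (isClosed_biInter fun i _ => hclosed i)
        (hpre j) (hpre a) ih.1 (hmeet j a) (ih.2 j) (ih.2 a)
  obtain ⟨j⟩ := ‹Nonempty ι›
  exact ((hclosed j).isCompact.inter_iInter_nonempty s hclosed fun F => (hfin F).2 j).mono
    inter_subset_right

theorem connectedComponentIn_compl_eq_biInter (hX : TreeLike X) {V : Set X} {w : X}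
    (hw : w ∉ V) : connectedComponentIn Vᶜ w = ⋂ v ∈ V, connectedComponentIn {v}ᶜ w := by
  refine subset_antisymm (subset_iInter₂ fun v hv =>
    isPreconnected_connectedComponentIn.subset_connectedComponentIn (mem_connectedComponentIn hw)
      ((connectedComponentIn_subset _ _).trans
        (compl_subset_compl.mpr (singleton_subset_iff.mpr hv))))
    fun z hz => ?_
  have harc : connectingSet w z ⊆ Vᶜ := fun g hg hgV => by
    have hzv := mem_iInter₂.mp hz g hgV
    have hwg : w ∈ ({g} : Set X)ᶜ := fun h => hw (by rwa [mem_singleton_iff.mp h])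
    exact connectedComponentIn_subset _ _
      (connectingSet_subset isPreconnected_connectedComponentIn
        (mem_connectedComponentIn hwg) hzv hg) rfl
  exact (hX w z).subset_connectedComponentIn (left_mem_connectingSet w z) harc
    (right_mem_connectingSet w z)

/-- Otherwise the preconnected set `C ∩ (E ∪ {m} ∪ E')` would be the disconnected `E ∪ E'`. -/
theorem inter_nonempty_of_mem_closure (hX : TreeLike X) {E E' C : Set X} {m : X}
    (hE : IsOpen E) (hE' : IsOpen E') (pE : IsPreconnected E) (pE' : IsPreconnected E')
    (hmE : m ∈ closure E) (hmE' : m ∈ closure E') (pC : IsPreconnected C) (hEC : E ⊆ C)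
    (hE'C : E' ⊆ C) (hmC : m ∉ C) : (E ∩ E').Nonempty := by
  have hB := hX.isPreconnected_inter pC
    ((pE.insert_of_mem_closure hmE).union m (mem_insert m E) (mem_insert m E')
      (pE'.insert_of_mem_closure hmE'))
  have hcover : C ∩ (insert m E ∪ insert m E') ⊆ E ∪ E' := by
    rintro z ⟨hzC, (rfl | hz) | (rfl | hz)⟩
    exacts [absurd hzC hmC, .inl hz, absurd hzC hmC, .inr hz]
  obtain ⟨e, he⟩ := closure_nonempty_iff.mp ⟨m, hmE⟩
  obtain ⟨e', he'⟩ := closure_nonempty_iff.mp ⟨m, hmE'⟩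
  obtain ⟨z, -, hz⟩ := hB E E' hE hE' hcover ⟨e, ⟨hEC he, .inl (.inr he)⟩, he⟩
    ⟨e', ⟨hE'C he', .inr (.inr he')⟩, he'⟩
  exact ⟨z, hz⟩

end TreeLike

end Arcs

section Chart

def flipIoo : Ioo (0:ℝ) 1 ≃ₜ Ioo (0:ℝ) 1 where
  toFun a := ⟨1 - a, by linarith [a.2.2], by linarith [a.2.1]⟩
  invFun a := ⟨1 - a, by linarith [a.2.2], by linarith [a.2.1]⟩
  left_inv a := Subtype.ext (sub_sub_cancel 1 _)
  right_inv a := Subtype.ext (sub_sub_cancel 1 _)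
  continuous_toFun := (continuous_const.sub continuous_subtype_val).subtype_mk _
  continuous_invFun := (continuous_const.sub continuous_subtype_val).subtype_mk _

variable {X : Type*} [TopologicalSpace X] {E : Set X} (h : E ≃ₜ Ioo (0:ℝ) 1)

def seg (J : Set ℝ) : Set X := {z | ∃ hz : z ∈ E, (h ⟨z, hz⟩ : ℝ) ∈ J}

def ptOf (t : ℝ) (ht : t ∈ Ioo (0:ℝ) 1) : X := h.symm ⟨t, ht⟩

theorem ptOf_mem (t : ℝ) (ht : t ∈ Ioo (0:ℝ) 1) : ptOf h t ht ∈ E :=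
  (h.symm ⟨t, ht⟩).2

theorem coord_ptOf (t : ℝ) (ht : t ∈ Ioo (0:ℝ) 1) (hm : ptOf h t ht ∈ E) :
    (h ⟨ptOf h t ht, hm⟩ : ℝ) = t := by
  simp [ptOf]

theorem ptOf_coord {z : X} (hz : z ∈ E) : ptOf h (h ⟨z, hz⟩) (h ⟨z, hz⟩).2 = z := by
  simp [ptOf]

theorem eq_of_coord_eq {z z' : X} (hz : z ∈ E) (hz' : z' ∈ E)
    (hc : (h ⟨z, hz⟩ : ℝ) = h ⟨z', hz'⟩) : z = z' :=
  congrArg Subtype.val (h.injective (Subtype.ext hc))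

theorem seg_subset (J : Set ℝ) : seg h J ⊆ E := fun _ ⟨hz, _⟩ => hz

theorem ptOf_mem_seg_iff {J : Set ℝ} {t : ℝ} (ht : t ∈ Ioo (0:ℝ) 1) :
    ptOf h t ht ∈ seg h J ↔ t ∈ J :=
  ⟨fun ⟨hm, hJ⟩ => coord_ptOf h t ht hm ▸ hJ, fun htJ => ⟨ptOf_mem h t ht, by rwa [coord_ptOf]⟩⟩

theorem isEmbedding_ptOf : IsEmbedding fun t : Ioo (0:ℝ) 1 => ptOf h t t.2 :=
  IsEmbedding.subtypeVal.comp h.symm.isEmbedding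

theorem seg_eq_image (J : Set ℝ) :
    seg h J = (fun t : Ioo (0:ℝ) 1 => ptOf h t t.2) '' ((↑) ⁻¹' J) := by
  ext z
  constructor
  · rintro ⟨hz, hzJ⟩
    exact ⟨h ⟨z, hz⟩, hzJ, ptOf_coord h hz⟩
  · rintro ⟨t, htJ, rfl⟩
    exact (ptOf_mem_seg_iff h t.2).mpr htJ

theorem isPreconnected_seg {J : Set ℝ} (hJ : IsPreconnected J) (hJI : J ⊆ Ioo (0:ℝ) 1) :
    IsPreconnected (seg h J) := by
  rw [seg_eq_image]
  refine IsPreconnected.image ?_ _ (isEmbedding_ptOf h).continuous.continuousOn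
  rwa [← IsInducing.subtypeVal.isPreconnected_image, Subtype.image_preimage_coe,
    inter_eq_right.mpr hJI]

theorem isCompact_seg_Icc {a b : ℝ} (ha : 0 < a) (hb : b < 1) : IsCompact (seg h (Icc a b)) := by
  rw [seg_eq_image]
  refine IsCompact.image ?_ (isEmbedding_ptOf h).continuous
  exact IsInducing.subtypeVal.isCompact_preimage' isCompact_Icc
    (by rw [Subtype.range_coe]; exact Icc_subset_Ioo ha hb)

theorem ptOf_mem_closure_seg {J : Set ℝ} (hJ : J ⊆ Ioo (0:ℝ) 1) {s : ℝ}
    (hs : s ∈ Ioo (0:ℝ) 1) (hsJ : s ∈ closure J) : ptOf h s hs ∈ closure (seg h J) := by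
  have hs' : (⟨s, hs⟩ : Ioo (0:ℝ) 1) ∈ closure ((↑) ⁻¹' J) := by
    rwa [closure_subtype, Subtype.image_preimage_coe, inter_eq_right.mpr hJ]
  rw [seg_eq_image]
  exact (map_mem_closure (isEmbedding_ptOf h).continuous hs' (mapsTo_image _ _) :)

theorem seg_trans_flipIoo (J : Set ℝ) : seg (h.trans flipIoo) J = seg h ((1 - ·) ⁻¹' J) := rfl

theorem mem_closure_seg_of_mem_closure [T2Space X] {p : X} (hp : p ∈ closure E) (hpE : p ∉ E) :
    (∀ t, 0 < t → t < 1 → p ∈ closure (seg h (Ioo 0 t))) ∨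
      ∀ t, 0 < t → t < 1 → p ∈ closure (seg h (Ioo t 1)) := by
  by_contra! ⟨⟨t₁, ht₁0, -, hp₁⟩, ⟨t₂, -, ht₂1, hp₂⟩⟩
  have hcover : E ⊆ seg h (Ioo 0 t₁) ∪ seg h (Icc t₁ t₂) ∪ seg h (Ioo t₂ 1) := fun z hz => by
    obtain ⟨hc0, hc1⟩ := (h ⟨z, hz⟩).2
    rcases lt_or_ge (h ⟨z, hz⟩ : ℝ) t₁ with h₁ | h₁
    · exact .inl (.inl ⟨hz, hc0, h₁⟩)
    rcases le_or_gt (h ⟨z, hz⟩ : ℝ) t₂ with h₂ | h₂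
    · exact .inl (.inr ⟨hz, h₁, h₂⟩)
    · exact .inr ⟨hz, h₂, hc1⟩
  have hp' := closure_mono hcover hp
  rw [closure_union, closure_union, (isCompact_seg_Icc h ht₁0 ht₂1).isClosed.closure_eq] at hp'
  rcases hp' with (h₁ | h₂) | h₃
  exacts [hp₁ h₁, hpE (seg_subset h _ h₂), hp₂ h₃]

theorem exists_homeomorph_mem_closure_seg [T2Space X] (hE : Nonempty (E ≃ₜ Ioo (0:ℝ) 1))
    {p : X} (hp : p ∈ closure E) (hpE : p ∉ E) : ∃ h : E ≃ₜ Ioo (0:ℝ) 1,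
      ∀ t, 0 < t → t < 1 → p ∈ closure (seg h (Ioo 0 t)) := by
  obtain ⟨h⟩ := hE
  rcases mem_closure_seg_of_mem_closure h hp hpE with hlow | hhigh
  · exact ⟨h, hlow⟩
  · refine ⟨h.trans flipIoo, fun t ht0 ht1 => ?_⟩
    have hflip : ((1 - ·) ⁻¹' Ioo 0 t : Set ℝ) = Ioo (1 - t) 1 := by
      ext s
      simp only [mem_preimage, mem_Ioo]
      constructor <;> rintro ⟨h₁, h₂⟩ <;> constructor <;> linarith
    rw [seg_trans_flipIoo, hflip]
    exact hhigh (1 - t) (by linarith) (by linarith)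

theorem exists_homeomorph_coord_lt (hE : Nonempty (E ≃ₜ Ioo (0:ℝ) 1)) {z z' : X} (hz : z ∈ E)
    (hz' : z' ∈ E) (hne : z ≠ z') : ∃ h : E ≃ₜ Ioo (0:ℝ) 1, (h ⟨z, hz⟩ : ℝ) < h ⟨z', hz'⟩ := by
  obtain ⟨h⟩ := hE
  rcases lt_or_gt_of_ne fun hc => hne (eq_of_coord_eq h hz hz' hc) with hlt | hgt
  · exact ⟨h, hlt⟩
  · exact ⟨h.trans flipIoo, sub_lt_sub_left hgt 1⟩

theorem TreeLike.mem_of_coord_between (hX : TreeLike X) {A : Set X} (hA : IsPreconnected A)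
    {u v y : X} (hu : u ∈ E) (hv : v ∈ E) (hy : y ∈ E) (huA : u ∈ A) (hvA : v ∈ A)
    (huy : (h ⟨u, hu⟩ : ℝ) < h ⟨y, hy⟩) (hyv : (h ⟨y, hy⟩ : ℝ) < h ⟨v, hv⟩) : y ∈ A := by
  set f := fun t : Ioo (0:ℝ) 1 => ptOf h t t.2
  have harc : connectingSet u v ⊆ range f := by
    refine (connectingSet_subset (isPreconnected_seg h isPreconnected_Icc ?_)
      ⟨hu, le_rfl, (huy.trans hyv).le⟩ ⟨hv, (huy.trans hyv).le, le_rfl⟩).trans ?_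
    · exact Icc_subset_Ioo (h ⟨u, hu⟩).2.1 (h ⟨v, hv⟩).2.2
    · rw [seg_eq_image]; exact image_subset_range _ _
  have hpre : IsPreconnected (((↑) : Ioo (0:ℝ) 1 → ℝ) '' (f ⁻¹' connectingSet u v)) := by
    refine IsPreconnected.image ?_ _ continuous_subtype_val.continuousOn
    rw [← (isEmbedding_ptOf h).isInducing.isPreconnected_image, image_preimage_eq_of_subset harc]
    exact hX u v
  obtain ⟨s, hs, hsy⟩ := hpre.ordConnected.out
    ⟨h ⟨u, hu⟩, by simpa [f, ptOf_coord] using left_mem_connectingSet u v, rfl⟩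
    ⟨h ⟨v, hv⟩, by simpa [f, ptOf_coord] using right_mem_connectingSet u v, rfl⟩
    ⟨huy.le, hyv.le⟩
  have : s = h ⟨y, hy⟩ := Subtype.ext hsy
  subst this
  exact connectingSet_subset hA huA hvA (by simpa [f, ptOf_coord] using hs)

end Chart

section Germs

variable {X : Type*} [TopologicalSpace X]

/-- `C` leaves `m` along a single edge `E`: `m` is the lower end of the part of `E` above the
coordinate `a`, that part lies in `C`, and every arc from `m` into `C` runs through it. -/
structure EdgeGerm (m : X) (C : Set X) where
  E : Set X
  h : E ≃ₜ Ioo (0:ℝ) 1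
  a : ℝ
  nonneg : 0 ≤ a
  lt_one : a < 1
  seg_subset : seg h (Ioo a 1) ⊆ C
  mem_closure_seg : ∀ t, a < t → t < 1 → m ∈ closure (seg h (Ioo a t))
  connectingSet_inter_nonempty : ∀ z ∈ C, (connectingSet m z ∩ seg h (Ioo a 1)).Nonempty

namespace EdgeGerm

variable {m : X} {C : Set X} (G : EdgeGerm m C)

theorem mem_Ioo_of_mem_Ioo {t : ℝ} (ht : t ∈ Ioo G.a 1) : t ∈ Ioo (0:ℝ) 1 :=
  ⟨G.nonneg.trans_lt ht.1, ht.2⟩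

def point (t : ℝ) (ht : t ∈ Ioo G.a 1) : X := ptOf G.h t (G.mem_Ioo_of_mem_Ioo ht)

theorem point_mem_seg_iff {t : ℝ} (ht : t ∈ Ioo G.a 1) {J : Set ℝ} :
    G.point t ht ∈ seg G.h J ↔ t ∈ J :=
  ptOf_mem_seg_iff G.h _

theorem mem_component_point (hmC : m ∉ C) {t : ℝ} (ht : t ∈ Ioo G.a 1) :
    m ∈ connectedComponentIn {G.point t ht}ᶜ m :=
  mem_connectedComponentIn fun hm => hmC <|
    (mem_singleton_iff.mp hm) ▸ G.seg_subset ((G.point_mem_seg_iff ht).mpr ht)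

theorem seg_subset_component (hmC : m ∉ C) {t : ℝ} (ht : t ∈ Ioo G.a 1) :
    seg G.h (Ioo G.a t) ⊆ connectedComponentIn {G.point t ht}ᶜ m := by
  have hpre : IsPreconnected (insert m (seg G.h (Ioo G.a t))) :=
    (isPreconnected_seg G.h isPreconnected_Ioo
      (Ioo_subset_Ioo G.nonneg ht.2.le)).insert_of_mem_closure (G.mem_closure_seg t ht.1 ht.2)
  refine (subset_insert _ _).trans (hpre.subset_connectedComponentIn (mem_insert _ _) ?_)
  rintro z (rfl | hz) hzt
  · exact connectedComponentIn_subset _ _ (G.mem_component_point hmC ht) hzt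
  · rw [mem_singleton_iff.mp hzt, G.point_mem_seg_iff] at hz
    exact hz.2.false

theorem notMem_component (hX : TreeLike X) (hmC : m ∉ C) {t : ℝ} (ht : t ∈ Ioo G.a 1)
    {z : X} (hz : z ∈ seg G.h (Ioo t 1)) : z ∉ connectedComponentIn {G.point t ht}ᶜ m := by
  intro hzD
  have hmid : (G.a + t) / 2 ∈ Ioo G.a 1 := ⟨by linarith [ht.1], by linarith [ht.1, ht.2]⟩
  have huD := G.seg_subset_component hmC ht <|
    (G.point_mem_seg_iff hmid).mpr ⟨by linarith [ht.1], by linarith [ht.1]⟩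
  obtain ⟨hzE, hzc⟩ := hz
  have hpt := hX.mem_of_coord_between G.h isPreconnected_connectedComponentIn
    (ptOf_mem G.h _ _) hzE (ptOf_mem G.h t (G.mem_Ioo_of_mem_Ioo ht)) huD hzD
    (by rw [coord_ptOf, coord_ptOf]; linarith [ht.1]) (by rw [coord_ptOf]; exact hzc.1)
  exact connectedComponentIn_subset _ _ hpt rfl

theorem component_mono (hX : TreeLike X) (hmC : m ∉ C) {t t' : ℝ} (ht : t ∈ Ioo G.a 1)
    (ht' : t' ∈ Ioo G.a 1) (htt' : t ≤ t') :
    connectedComponentIn {G.point t ht}ᶜ m ⊆ connectedComponentIn {G.point t' ht'}ᶜ m := by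
  rcases htt'.eq_or_lt with rfl | hlt
  · exact Subset.rfl
  refine isPreconnected_connectedComponentIn.subset_connectedComponentIn
    (G.mem_component_point hmC ht) fun z hz hzt' => ?_
  rw [mem_singleton_iff.mp hzt'] at hz
  exact G.notMem_component hX hmC ht ((G.point_mem_seg_iff ht').mpr ⟨hlt, ht'.2⟩) hz

theorem exists_notMem_component {z : X} (hz : z ∈ C) :
    ∃ t, ∃ ht : t ∈ Ioo G.a 1, z ∉ connectedComponentIn {G.point t ht}ᶜ m := by
  obtain ⟨g, hg, hgE, hgc⟩ := G.connectingSet_inter_nonempty z hz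
  refine ⟨_, hgc, fun hzD => ?_⟩
  have hpt : G.point _ hgc = g := ptOf_coord G.h hgE
  have hmD : m ∈ connectedComponentIn {G.point _ hgc}ᶜ m :=
    mem_connectedComponentIn (connectedComponentIn_nonempty_iff.mp ⟨z, hzD⟩)
  have hgD := connectingSet_subset isPreconnected_connectedComponentIn hmD hzD hg
  exact connectedComponentIn_subset _ _ hgD hpt.symm

end EdgeGerm

theorem TreeLike.nonempty_edgeGerm_of_mem [T1Space X]
    (hX : TreeLike X) {E : Set X} (hE : IsOpen E) (hEh : Nonempty (E ≃ₜ Ioo (0:ℝ) 1))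
    {m y : X} (hmE : m ∈ E) (hmC : m ∈ closure (connectedComponentIn {m}ᶜ y)) :
    Nonempty (EdgeGerm m (connectedComponentIn {m}ᶜ y)) := by
  set C := connectedComponentIn {m}ᶜ y with hC
  have hm_notC : m ∉ C := fun h => connectedComponentIn_subset _ _ h rfl
  obtain ⟨q, hqE, hqC⟩ := mem_closure_iff.mp hmC E hE hmE
  obtain ⟨h, hmq⟩ := exists_homeomorph_coord_lt hEh hmE hqE fun hmq => hm_notC (hmq ▸ hqC)
  set a := (h ⟨m, hmE⟩ : ℝ)
  have hIoo : Ioo a 1 ⊆ Ioo 0 1 := Ioo_subset_Ioo_left (h ⟨m, hmE⟩).2.1.le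
  have hm_seg : m ∉ seg h (Ioo a 1) := fun ⟨_, hc⟩ => hc.1.false
  refine ⟨⟨E, h, a, (h ⟨m, hmE⟩).2.1.le, (h ⟨m, hmE⟩).2.2, ?_, fun t hat _ => ?_,
    fun z hz => ?_⟩⟩
  · rw [hC, connectedComponentIn_eq hqC]
    exact (isPreconnected_seg h isPreconnected_Ioo hIoo).subset_connectedComponentIn
      ⟨hqE, hmq, (h ⟨q, hqE⟩).2.2⟩ fun z hz hzm => hm_seg (mem_singleton_iff.mp hzm ▸ hz)
  · rw [← ptOf_coord h hmE]
    exact ptOf_mem_closure_seg h ((Ioo_subset_Ioo_right (by linarith)).trans hIoo) _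
      (by rw [closure_Ioo hat.ne]; exact left_mem_Icc.mpr hat.le)
  · obtain ⟨g, hg, hgE, hgm⟩ := hX m z E {m}ᶜ hE isOpen_compl_singleton
      (fun g _ => (em (g = m)).elim (fun h => .inl (h ▸ hmE)) .inr)
      ⟨m, left_mem_connectingSet m z, hmE⟩
      ⟨z, right_mem_connectingSet m z, fun hzm => hm_notC (mem_singleton_iff.mp hzm ▸ hz)⟩
    have hgC : g ∈ C := (connectingSet_subset
      (isPreconnected_connectedComponentIn.insert_of_mem_closure hmC) (mem_insert m C) (.inr hz)
      hg).resolve_left hgm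
    rcases lt_trichotomy (h ⟨g, hgE⟩ : ℝ) a with hlt | heq | hgt
    · exact (hm_notC (hX.mem_of_coord_between h isPreconnected_connectedComponentIn hgE hqE hmE
        hgC hqC hlt hmq)).elim
    · exact (hgm (eq_of_coord_eq h hgE hmE heq)).elim
    · exact ⟨g, hg, hgE, hgt, (h ⟨g, hgE⟩).2.2⟩

end Germs

theorem ENNReal.one_sub_lt_half {x : ENNReal} (hx : 1 / 2 < x) : 1 - x < 1 / 2 := by
  rcases le_or_gt x 1 with h | h
  · refine ENNReal.sub_lt_of_lt_add h ?_
    calc (1 : ENNReal) = 1 / 2 + 1 / 2 := (ENNReal.add_halves 1).symm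
      _ < 1 / 2 + x := by gcongr; norm_num
  · rw [tsub_eq_zero_of_le h.le]
    norm_num

theorem inter_nonempty_of_half_lt {Ω : Type*} [MeasurableSpace Ω] {μ : Measure Ω}
    [IsProbabilityMeasure μ] {s t : Set Ω} (ht : MeasurableSet t) (hs : 1 / 2 < μ s)
    (ht' : 1 / 2 < μ t) : (s ∩ t).Nonempty :=
  nonempty_inter_of_measure_lt_add μ ht (subset_univ s) (subset_univ t) <| by
    rw [measure_univ, ← ENNReal.add_halves 1]
    exact ENNReal.add_lt_add hs ht'

namespace MeasuredTree

variable (M : MeasuredTree)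

theorem treeLike : TreeLike M.carrier := treeLike_of_forall_exists_least M.arc

theorem isOpen_component (x y : M.carrier) : IsOpen (connectedComponentIn {x}ᶜ y) :=
  isOpen_connectedComponentIn_of_finite isClosed_singleton.isOpen_compl
    ((M.finiteComponents x).subset fun _ ⟨z, hz, hC⟩ => ⟨z, hz, hC⟩) y

variable {M} in
theorem mem_closure_component {x y : M.carrier} (hy : y ≠ x) :
    x ∈ closure (connectedComponentIn {x}ᶜ y) :=
  mem_closure_connectedComponentIn_compl_singleton hy (M.isOpen_component x y)

variable {M} in
theorem isPreconnected_insert_component {x y : M.carrier} (hy : y ≠ x) :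
    IsPreconnected (insert x (connectedComponentIn {x}ᶜ y)) :=
  isPreconnected_connectedComponentIn.insert_of_mem_closure (mem_closure_component hy)

/-- Empty when `w` is a vertex. -/
abbrev edge (w : M.carrier) : Set M.carrier :=
  connectedComponentIn (M.vertices : Set M.carrier)ᶜ w

theorem edge_eq_biInter {w : M.carrier} (hw : w ∉ M.vertices) :
    M.edge w = ⋂ v ∈ (M.vertices : Set M.carrier), connectedComponentIn {v}ᶜ w :=
  M.treeLike.connectedComponentIn_compl_eq_biInter (Finset.mem_coe.not.mpr hw)

theorem isOpen_edge (w : M.carrier) : IsOpen (M.edge w) := by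
  by_cases hw : w ∈ M.vertices
  · rw [edge, connectedComponentIn_eq_empty (not_not.mpr (Finset.mem_coe.mpr hw))]
    exact isOpen_empty
  · rw [M.edge_eq_biInter hw]
    exact M.vertices.finite_toSet.isOpen_biInter fun v _ => M.isOpen_component v w

/-- An edge is determined by the components of the complements of the vertices containing it,
and each vertex has only finitely many of those. -/
theorem finite_edges : {E | ∃ w ∉ M.vertices, E = M.edge w}.Finite := by
  refine ((Set.Finite.pi (t := fun v : (M.vertices : Set M.carrier) =>
      {C | ∃ y ≠ (v : M.carrier), C = connectedComponentIn {(v : M.carrier)}ᶜ y})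
      fun v => M.finiteComponents v).image fun f => ⋂ v, f v).subset ?_
  rintro _ ⟨w, hw, rfl⟩
  refine ⟨fun v => connectedComponentIn {(v : M.carrier)}ᶜ w,
    fun v _ => ⟨w, fun hwv => hw (hwv ▸ v.2), rfl⟩, ?_⟩
  rw [M.edge_eq_biInter hw, biInter_eq_iInter]

theorem mem_or_exists_mem_closure_inter_edge {S : Set M.carrier} {p : M.carrier}
    (hp : p ∈ closure S) :
    p ∈ S ∨ ∃ w ∉ M.vertices, p ∈ closure (S ∩ M.edge w) := by
  have hcover : S ⊆ (S ∩ M.vertices) ∪ ⋃ E ∈ {E | ∃ w ∉ M.vertices, E = M.edge w}, S ∩ E :=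
    fun z hz => by
      by_cases hzV : z ∈ M.vertices
      · exact .inl ⟨hz, hzV⟩
      · exact .inr (mem_biUnion ⟨z, hzV, rfl⟩ ⟨hz, mem_connectedComponentIn hzV⟩)
  have hp' := closure_mono hcover hp
  rw [closure_union, M.finite_edges.closure_biUnion,
    (M.vertices.finite_toSet.subset inter_subset_right).isClosed.closure_eq] at hp'
  rcases hp' with hpS | hpE
  · exact .inl hpS.1
  · obtain ⟨_, ⟨w, hw, rfl⟩, hpw⟩ := mem_iUnion₂.mp hpE
    exact .inr ⟨w, hw, hpw⟩

variable {M}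

theorem edge_subset_component {w x z : M.carrier} (hx : x ∈ M.vertices) (hz : z ∈ M.edge w) :
    M.edge w ⊆ connectedComponentIn {x}ᶜ z := by
  have hzV : z ∈ (M.vertices : Set M.carrier)ᶜ := connectedComponentIn_subset _ _ hz
  rw [edge, connectedComponentIn_eq hz]
  exact isPreconnected_connectedComponentIn.subset_connectedComponentIn
    (mem_connectedComponentIn hzV)
    ((connectedComponentIn_subset _ _).trans fun g hg hgx => hg (mem_singleton_iff.mp hgx ▸ hx))

theorem nonempty_edgeGerm_of_mem_vertices {m y : M.carrier} (hm : m ∈ M.vertices) (hy : y ≠ m) :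
    Nonempty (EdgeGerm m (connectedComponentIn {m}ᶜ y)) := by
  set C := connectedComponentIn {m}ᶜ y with hC
  have hm_notC : m ∉ C := fun h => connectedComponentIn_subset _ _ h rfl
  have hedgeC : ∀ {w z}, z ∈ C → z ∈ M.edge w → M.edge w ⊆ C := fun hzC hzE => by
    rw [hC, connectedComponentIn_eq hzC]
    exact edge_subset_component hm hzE
  have hm_edge : ∀ w, m ∉ M.edge w := fun w hmE => connectedComponentIn_subset _ _ hmE hm
  rcases M.mem_or_exists_mem_closure_inter_edge (mem_closure_component hy) with
    hmC | ⟨w, hw, hmw⟩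
  · exact (hm_notC hmC).elim
  obtain ⟨c, hcC, hcE⟩ := closure_nonempty_iff.mp ⟨m, hmw⟩
  have hEC := hedgeC hcC hcE
  obtain ⟨h, hcl⟩ := exists_homeomorph_mem_closure_seg (M.edgeHomeo w hw)
    (closure_mono inter_subset_right hmw) (hm_edge w)
  refine ⟨⟨M.edge w, h, 0, le_rfl, one_pos, (seg_subset h _).trans hEC, hcl, fun z hz => ?_⟩⟩
  have hzm : z ≠ m := fun hzm => hm_notC (hzm ▸ hz)
  have hAC : connectingSet m z \ {m} ⊆ C := fun g ⟨hg, hgm⟩ =>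
    (connectingSet_subset (isPreconnected_insert_component hy) (mem_insert m C) (.inr hz) hg
      ).resolve_left hgm
  rcases M.mem_or_exists_mem_closure_inter_edge ((M.treeLike m z).mem_closure_diff_singleton
    (left_mem_connectingSet m z) (right_mem_connectingSet m z) hzm) with hmA | ⟨w', hw', hmw'⟩
  · exact (hmA.2 rfl).elim
  obtain ⟨g, hgA, hgE'⟩ := closure_nonempty_iff.mp ⟨m, hmw'⟩
  obtain ⟨e, he, he'⟩ := M.treeLike.inter_nonempty_of_mem_closure (M.isOpen_edge w)
    (M.isOpen_edge w') isPreconnected_connectedComponentIn isPreconnected_connectedComponentIn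
    (closure_mono inter_subset_right hmw) (closure_mono inter_subset_right hmw')
    isPreconnected_connectedComponentIn hEC (hedgeC (hAC hgA) hgE') hm_notC
  have hww' : M.edge w' = M.edge w :=
    (connectedComponentIn_eq he').trans (connectedComponentIn_eq he).symm
  have hgE : g ∈ M.edge w := hww' ▸ hgE'
  exact ⟨g, hgA.1, hgE, (h ⟨g, hgE⟩).2⟩

/-- The components of `{y}ᶜ` containing `m` shrink, as `y` runs down the germ to `m`, to a set
disjoint from `C`; by continuity from above, `μ Cᶜ ≥ 1/2`. -/
theorem exists_component_le_half_of_edgeGerm {m : M.carrier} {C : Set M.carrier}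
    (G : EdgeGerm m C) (hC : MeasurableSet C) (hmC : m ∉ C) (hheavy : 1 / 2 < M.μ C) :
    ∃ y ∈ C, M.μ (connectedComponentIn {y}ᶜ m) ≤ 1 / 2 := by
  by_contra! hlight
  obtain ⟨u, hu_anti, hu, hu_lim⟩ := exists_seq_strictAnti_tendsto' G.lt_one
  set D : ℕ → Set M.carrier := fun n => connectedComponentIn {G.point (u n) (hu n)}ᶜ m
  have hD_anti : Antitone D := fun i j hij =>
    G.component_mono M.treeLike hmC (hu j) (hu i) (hu_anti.antitone hij)
  have hD_inter : ⋂ n, D n ⊆ Cᶜ := fun z hz hzC => by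
    obtain ⟨t, ht, hzt⟩ := G.exists_notMem_component hzC
    obtain ⟨n, hn⟩ := (hu_lim.eventually (gt_mem_nhds ht.1)).exists
    exact hzt (G.component_mono M.treeLike hmC (hu n) ht hn.le (mem_iInter.mp hz n))
  have hμD : M.μ (⋂ n, D n) = ⨅ n, M.μ (D n) :=
    hD_anti.measure_iInter (fun n => (M.isOpen_component _ m).nullMeasurableSet)
      ⟨0, measure_ne_top _ _⟩
  have : 1 / 2 ≤ M.μ Cᶜ := calc
    1 / 2 ≤ ⨅ n, M.μ (D n) := le_iInf fun n => (hlight _ (G.seg_subset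
      ((G.point_mem_seg_iff (hu n)).mpr (hu n)))).le
    _ = M.μ (⋂ n, D n) := hμD.symm
    _ ≤ M.μ Cᶜ := measure_mono hD_inter
  rw [prob_compl_eq_one_sub hC] at this
  exact (ENNReal.one_sub_lt_half hheavy).not_ge this

theorem exists_component_le_half {m y : M.carrier} (hy : y ≠ m)
    (hheavy : 1 / 2 < M.μ (connectedComponentIn {m}ᶜ y)) :
    ∃ z ∈ connectedComponentIn {m}ᶜ y, M.μ (connectedComponentIn {z}ᶜ m) ≤ 1 / 2 := by
  obtain ⟨G⟩ : Nonempty (EdgeGerm m (connectedComponentIn {m}ᶜ y)) := by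
    by_cases hm : m ∈ M.vertices
    · exact nonempty_edgeGerm_of_mem_vertices hm hy
    · exact M.treeLike.nonempty_edgeGerm_of_mem (M.isOpen_edge m) (M.edgeHomeo m hm)
        (mem_connectedComponentIn hm) (mem_closure_component hy)
  exact exists_component_le_half_of_edgeGerm G (M.isOpen_component m y).measurableSet
    (fun hm => connectedComponentIn_subset _ _ hm rfl) hheavy

theorem compl_component_subset {x y : M.carrier} (hxy : x ≠ y) :
    (connectedComponentIn {x}ᶜ y)ᶜ ⊆ connectedComponentIn {y}ᶜ x := by
  intro z hz
  rcases eq_or_ne z x with rfl | hzx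
  · exact mem_connectedComponentIn hxy
  refine (isPreconnected_insert_component hzx).subset_connectedComponentIn (mem_insert x _)
    ?_ (.inr (mem_connectedComponentIn hzx))
  rintro g (rfl | hg) hgy
  · exact hxy (mem_singleton_iff.mp hgy)
  · rw [mem_singleton_iff.mp hgy] at hg
    exact hz (connectedComponentIn_eq hg ▸ mem_connectedComponentIn hzx)

theorem eq_of_isMedian {x y : M.carrier} (hx : M.IsMedian x) (hy : M.IsMedian y) : x = y := by
  by_contra hxy
  set C := connectedComponentIn {x}ᶜ y
  set D := connectedComponentIn {y}ᶜ x
  have hCD : C ∪ D = univ := eq_univ_of_forall fun z => (em (z ∈ C)).imp_right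
    fun hz => compl_component_subset hxy hz
  have hCD_pos : 0 < M.μ (C ∩ D) := M.openPos _
    ((M.isOpen_component x y).inter (M.isOpen_component y x))
    (inter_comm D C ▸ mem_closure_iff.mp (mem_closure_component (Ne.symm hxy)) D
      (M.isOpen_component y x) (mem_connectedComponentIn hxy))
  have : 1 + M.μ (C ∩ D) ≤ 1 + 0 := calc
    1 + M.μ (C ∩ D) = M.μ C + M.μ D := by
      rw [← measure_union_add_inter C (M.isOpen_component y x).measurableSet, hCD, measure_univ]
    _ ≤ 1 / 2 + 1 / 2 := add_le_add (hx y (Ne.symm hxy)) (hy x hxy)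
    _ = 1 + 0 := by rw [ENNReal.add_halves, add_zero]
  exact hCD_pos.ne' <| nonpos_iff_eq_zero.mp <|
    (ENNReal.add_le_add_iff_left ENNReal.one_ne_top).mp this

theorem exists_isMedian : ∃ x, M.IsMedian x := by
  by_contra! hno
  have hheavy : ∀ x, ∃ y ≠ x, 1 / 2 < M.μ (connectedComponentIn {x}ᶜ y) := by
    simpa only [IsMedian, componentMeasure, not_forall, not_le, exists_prop] using hno
  choose H hHx hH using hheavy
  obtain ⟨m, hm⟩ := M.treeLike.iInter_nonempty
    (s := fun x => closure (connectedComponentIn {x}ᶜ (H x))) (fun _ => isClosed_closure)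
    (fun _ => isPreconnected_connectedComponentIn.closure)
    fun x x' => (inter_nonempty_of_half_lt (M.isOpen_component x' (H x')).measurableSet
      (hH x) (hH x')).mono (inter_subset_inter subset_closure subset_closure)
  obtain ⟨z, hz, hlight⟩ := exists_component_le_half (hHx m) (hH m)
  have hzm : m ≠ z := fun hmz => connectedComponentIn_subset _ _ hz hmz.symm
  have hmz : m ∈ connectedComponentIn {z}ᶜ (H z) :=
    (closure_connectedComponentIn_subset _ _ (mem_iInter.mp hm z)).resolve_right
      fun h => hzm (by simpa using h)
  exact (hH z).not_ge (connectedComponentIn_eq hmz ▸ hlight)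

end MeasuredTree

/-- Every measured tree has a unique median: there is exactly one point `x` such that
the measure of each connected component of the complement of `x` does not exceed `1/2`. -/
theorem measuredTree_existsUnique_median (M : MeasuredTree) :
    ∃! x : M.carrier, M.IsMedian x := by
  obtain ⟨x, hx⟩ := M.exists_isMedian
  exact ⟨x, hx, fun y hy => M.eq_of_isMedian hy hx⟩
end
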